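/- arXiv:1503.07510 — 6 statements merged into one kernel-verified Lean document; each statement's English description precedes it below -/
import Mathlib

section
/- Let S be a W×W real symmetric matrix with nonnegative off-diagonal entries and zero row sums, and suppose there is a spanning tree T on the vertex set {1,…,W} such that S_{ij} ≥ c > 0 for every edge {i,j} of T. Let S^{(1)} be the matrix obtained from S by deleting the first row and column. Then for every vector ρ = (ρ₂,…,ρ_W) ∈ ℝ^{W−1}, one has −ρᵀ S^{(1)} ρ ≥ (c / W²) ‖ρ‖₂². -/
/-!
Extend `ρ` by a zero entry at the deleted vertex `0` to a vector `x` on all `W` vertices. Then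
`-ρᵀ S⁽¹⁾ ρ = -xᵀ S x = ½ ∑ⱼₖ Sⱼₖ (xⱼ - xₖ)²`, and keeping only the ordered pairs that are tree
edges bounds this below by `c E`, where `E = ∑_{uv ∈ T} (x_u - x_v)²`. Since `x₀ = 0`, each
`x_v` telescopes along the tree path from `0` to `v`, which has fewer than `W` edges, so
Cauchy–Schwarz gives `x_v² ≤ W E`, and summing over the `W` vertices gives `‖ρ‖² ≤ W² E`.
-/

open Finset Matrix

lemma List.sq_sum_le_length_mul_sum_sq (l : List ℝ) :
    l.sum ^ 2 ≤ l.length * (l.map (· ^ 2)).sum := by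
  have h := sq_sum_le_card_mul_sum_sq (s := univ) (f := fun i : Fin l.length => l[(i : ℕ)])
  simpa only [card_univ, Fintype.card_fin, ← List.sum_ofFn, List.ofFn_getElem,
    List.ofFn_getElem_eq_map l (· ^ 2)] using h

lemma Matrix.two_mul_neg_dotProduct_mulVec {ι R : Type*} [Fintype ι] [CommRing R]
    (S : Matrix ι ι R) (hsym : S.IsSymm) (hrow : ∀ i, ∑ j, S i j = 0) (x : ι → R) :
    2 * -(x ⬝ᵥ (S *ᵥ x)) = ∑ i, ∑ j, S i j * (x i - x j) ^ 2 := by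
  have hcol : ∀ j, ∑ i, S i j = 0 := fun j => by simpa [hsym.apply] using hrow j
  calc 2 * -(x ⬝ᵥ (S *ᵥ x))
      = ∑ i, (∑ j, S i j) * x i ^ 2 + ∑ j, (∑ i, S i j) * x j ^ 2
          - 2 * ∑ i, ∑ j, x i * (S i j * x j) := by
        simp [hrow, hcol, dotProduct, mulVec, mul_sum]
    _ = ∑ i, ∑ j, (S i j * x i ^ 2 + S i j * x j ^ 2 - 2 * (x i * (S i j * x j))) := by
        simp only [sum_mul, mul_sum, sum_add_distrib, sum_sub_distrib]
        rw [sum_comm (f := fun j i => S i j * x j ^ 2)]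
    _ = ∑ i, ∑ j, S i j * (x i - x j) ^ 2 := by
        refine sum_congr rfl fun i _ => sum_congr rfl fun j _ => ?_
        ring

lemma Matrix.dotProduct_submatrix_succAbove_mulVec {R : Type*} [CommSemiring R] {n : ℕ}
    (S : Matrix (Fin (n + 1)) (Fin (n + 1)) R) (p : Fin (n + 1)) (ρ : Fin n → R) :
    ρ ⬝ᵥ (S.submatrix p.succAbove p.succAbove *ᵥ ρ) =
      p.insertNth 0 ρ ⬝ᵥ (S *ᵥ p.insertNth 0 ρ) := by
  simp [dotProduct, mulVec, Fin.sum_univ_succAbove _ p]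

namespace SimpleGraph

variable {V : Type*} {G : SimpleGraph V}

def edgeSqDiff (x : V → ℝ) : Sym2 V → ℝ :=
  Sym2.lift ⟨fun u v => (x u - x v) ^ 2, fun _ _ => by ring⟩

lemma edgeSqDiff_nonneg (x : V → ℝ) (e : Sym2 V) : 0 ≤ edgeSqDiff x e :=
  Sym2.inductionOn e fun _ _ => sq_nonneg _

lemma edgeSqDiff_dart_edge (x : V → ℝ) (d : G.Dart) :
    edgeSqDiff x d.edge = (x d.fst - x d.snd) ^ 2 :=
  rfl

namespace Walk

lemma sum_darts_sub {M : Type*} [AddCommGroup M] (x : V → M) {u v : V} (w : G.Walk u v) :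
    (w.darts.map fun d => x d.fst - x d.snd).sum = x u - x v := by
  induction w with
  | nil => simp
  | cons _ _ ih => rw [darts_cons, List.map_cons, List.sum_cons, ih]; abel

lemma sq_sub_le_length_mul_sum_edgeSqDiff (x : V → ℝ) {u v : V} (w : G.Walk u v) :
    (x u - x v) ^ 2 ≤ w.length * (w.edges.map (edgeSqDiff x)).sum := by
  simpa [← sum_darts_sub x w, edges, Function.comp_def, edgeSqDiff_dart_edge] using
    List.sq_sum_le_length_mul_sum_sq (w.darts.map fun d => x d.fst - x d.snd)

lemma IsTrail.sum_edges_le_sum_edgeFinset {M : Type*} [AddCommMonoid M] [PartialOrder M]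
    [IsOrderedAddMonoid M] [Fintype G.edgeSet] {u v : V} {w : G.Walk u v} (hw : w.IsTrail)
    {f : Sym2 V → M} (hf : ∀ e, 0 ≤ f e) :
    (w.edges.map f).sum ≤ ∑ e ∈ G.edgeFinset, f e := by
  classical
  rw [← List.sum_toFinset f hw.edges_nodup]
  refine sum_le_sum_of_subset_of_nonneg (fun e he => ?_) fun e _ _ => hf e
  exact mem_edgeFinset.2 (w.edges_subset_edgeSet (List.mem_toFinset.1 he))

end Walk

lemma Connected.sq_sub_le_card_mul_sum_edgeSqDiff [Fintype V] [Fintype G.edgeSet]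
    (hG : G.Connected) (x : V → ℝ) (u v : V) :
    (x u - x v) ^ 2 ≤ Fintype.card V * ∑ e ∈ G.edgeFinset, edgeSqDiff x e := by
  classical
  obtain ⟨p, hp⟩ := (hG u v).some.toPath
  calc (x u - x v) ^ 2 ≤ p.length * (p.edges.map (edgeSqDiff x)).sum :=
        p.sq_sub_le_length_mul_sum_edgeSqDiff x
    _ ≤ Fintype.card V * ∑ e ∈ G.edgeFinset, edgeSqDiff x e := by
        gcongr
        · exact List.sum_nonneg (by simp [edgeSqDiff_nonneg])
        · exact_mod_cast hp.length_lt.le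
        · exact hp.isTrail.sum_edges_le_sum_edgeFinset (edgeSqDiff_nonneg x)

lemma Connected.sum_sq_le_card_sq_mul_sum_edgeSqDiff [Fintype V] [Fintype G.edgeSet]
    (hG : G.Connected) {x : V → ℝ} {u : V} (hx : x u = 0) :
    ∑ v, x v ^ 2 ≤ Fintype.card V ^ 2 * ∑ e ∈ G.edgeFinset, edgeSqDiff x e := by
  calc ∑ v, x v ^ 2 = ∑ v, (x v - x u) ^ 2 := by simp [hx]
    _ ≤ ∑ _v : V, Fintype.card V * ∑ e ∈ G.edgeFinset, edgeSqDiff x e :=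
        sum_le_sum fun v _ => hG.sq_sub_le_card_mul_sum_edgeSqDiff x v u
    _ = Fintype.card V ^ 2 * ∑ e ∈ G.edgeFinset, edgeSqDiff x e := by
        rw [sum_const, card_univ, nsmul_eq_mul]; ring

variable [Fintype V] [DecidableEq V] [DecidableRel G.Adj]

lemma sum_darts_edge_eq_two_nsmul {M : Type*} [AddCommMonoid M] (f : Sym2 V → M) :
    ∑ d : G.Dart, f d.edge = 2 • ∑ e ∈ G.edgeFinset, f e := by
  rw [← sum_fiberwise_of_maps_to (g := Dart.edge) (t := G.edgeFinset)
    fun d _ => mem_edgeFinset.2 d.edge_mem, smul_sum]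
  refine sum_congr rfl fun e he => ?_
  rw [sum_congr rfl fun d hd => congrArg f (mem_filter.1 hd).2, sum_const,
    G.dart_edge_fiber_card e (mem_edgeFinset.1 he)]

lemma mul_sum_edgeSqDiff_le_neg_dotProduct_mulVec (S : Matrix V V ℝ) (hsym : S.IsSymm)
    (hoff : ∀ i j, i ≠ j → 0 ≤ S i j) (hrow : ∀ i, ∑ j, S i j = 0) {c : ℝ}
    (hedge : ∀ i j, G.Adj i j → c ≤ S i j) (x : V → ℝ) :
    c * ∑ e ∈ G.edgeFinset, edgeSqDiff x e ≤ -(x ⬝ᵥ (S *ᵥ x)) := by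
  set F : V × V → ℝ := fun p => S p.1 p.2 * (x p.1 - x p.2) ^ 2
  have hF : ∀ p, 0 ≤ F p := fun ⟨i, j⟩ => by
    rcases eq_or_ne i j with rfl | hij
    · simp [F]
    · exact mul_nonneg (hoff i j hij) (sq_nonneg _)
  suffices 2 * (c * ∑ e ∈ G.edgeFinset, edgeSqDiff x e) ≤ 2 * -(x ⬝ᵥ (S *ᵥ x)) by linarith
  calc 2 * (c * ∑ e ∈ G.edgeFinset, edgeSqDiff x e)
      = ∑ d : G.Dart, c * edgeSqDiff x d.edge := by
        rw [← mul_sum, sum_darts_edge_eq_two_nsmul, nsmul_eq_mul]; push_cast; ring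
    _ ≤ ∑ d : G.Dart, F d.toProd :=
        sum_le_sum fun d _ =>
          mul_le_mul_of_nonneg_right (hedge _ _ d.adj) (edgeSqDiff_nonneg x _)
    _ = ∑ p ∈ univ.map ⟨Dart.toProd, Dart.toProd_injective⟩, F p := by
        rw [sum_map]; rfl
    _ ≤ ∑ p, F p := sum_le_univ_sum_of_nonneg hF
    _ = 2 * -(x ⬝ᵥ (S *ᵥ x)) := by
        rw [S.two_mul_neg_dotProduct_mulVec hsym hrow, Fintype.sum_prod_type]

end SimpleGraph

theorem stmt1 (n : ℕ) (c : ℝ) (hc : 0 < c)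
    (S : Matrix (Fin (n + 1)) (Fin (n + 1)) ℝ)
    (hsym : S.IsSymm)
    (hoff : ∀ i j, i ≠ j → 0 ≤ S i j)
    (hrow : ∀ i, ∑ j, S i j = 0)
    (G : SimpleGraph (Fin (n + 1)))
    (htree : G.IsTree)
    (hedge : ∀ i j, G.Adj i j → c ≤ S i j) :
    ∀ ρ : Fin n → ℝ,
      c / ((n + 1 : ℝ)) ^ 2 * ∑ j, ρ j ^ 2 ≤
        -(dotProduct ρ
          ((S.submatrix (Fin.succAbove 0) (Fin.succAbove 0)).mulVec ρ)) := by
  classical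
  intro ρ
  set x : Fin (n + 1) → ℝ := Fin.insertNth 0 0 ρ
  set E := ∑ e ∈ G.edgeFinset, SimpleGraph.edgeSqDiff x e
  have hρ : ∑ j, ρ j ^ 2 = ∑ v, x v ^ 2 := by simp [x, Fin.sum_univ_succAbove _ 0]
  have hpoincare : ∑ v, x v ^ 2 ≤ (n + 1) ^ 2 * E := by
    simpa using htree.connected.sum_sq_le_card_sq_mul_sum_edgeSqDiff (u := 0) (by simp [x])
  rw [S.dotProduct_submatrix_succAbove_mulVec 0 ρ, hρ]
  calc c / (n + 1) ^ 2 * ∑ v, x v ^ 2 ≤ c / (n + 1) ^ 2 * ((n + 1) ^ 2 * E) := by gcongr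
    _ = c * E := by field_simp
    _ ≤ -(x ⬝ᵥ (S *ᵥ x)) := G.mul_sum_edgeSqDiff_le_neg_dotProduct_mulVec S hsym hoff hrow hedge x
end

section
/- Let k ≥ 2 and let t₁, t₂, …, t_k be nonnegative reals with t₁ = 0 and t_k ≥ 1. Then ∑_{j=2}^{k} (t_j − t_{j−1})² / (1 + 2 t_{j−1}²) ≥ 1/(300 k²). -/
/-!
If every summand is at most `ε² = 1/(10k)²`, then each increment satisfies
`|t_j - t_{j-1}| ≤ ε (1 + 2|t_{j-1}|)`, so `1/2 + |t_j|` grows by a factor at most `1 + 2ε`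
per step. Starting from `1/2` at `j = 1`, it stays below `(1 + 2ε)^(k-1) / 2 ≤ e / 2 < 3/2`
up to `j = k`, which is incompatible with `t_k ≥ 1`.
-/

open Finset Real

lemma half_add_abs_le_of_sq_div_le {x y ε : ℝ} (hε : 0 ≤ ε)
    (h : (x - y) ^ 2 / (1 + 2 * y ^ 2) ≤ ε ^ 2) :
    1 / 2 + |x| ≤ (1 + 2 * ε) * (1 / 2 + |y|) := by
  have hsq : (x - y) ^ 2 ≤ (ε * (1 + 2 * |y|)) ^ 2 := calc
    (x - y) ^ 2 ≤ ε ^ 2 * (1 + 2 * y ^ 2) := (div_le_iff₀ (by positivity)).1 h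
    _ ≤ ε ^ 2 * (1 + 2 * |y|) ^ 2 := by
      gcongr
      nlinarith [abs_nonneg y, sq_abs y]
    _ = (ε * (1 + 2 * |y|)) ^ 2 := by ring
  have hdiff : |x - y| ≤ ε * (1 + 2 * |y|) := abs_le_of_sq_le_sq hsq (by positivity)
  linarith [abs_sub_abs_le_abs_sub x y]

lemma le_pow_sub_mul_of_le_mul {u : ℕ → ℝ} {r : ℝ} (hr : 0 ≤ r) {m n : ℕ}
    (hmn : m ≤ n) (h : ∀ j, m < j → j ≤ n → u j ≤ r * u (j - 1)) : u n ≤ r ^ (n - m) * u m := by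
  induction n, hmn using Nat.le_induction with
  | base => simp
  | succ n hmn ih =>
    calc u (n + 1) ≤ r * u n := h (n + 1) (by omega) le_rfl
      _ ≤ r * (r ^ (n - m) * u m) := by
        gcongr
        exact ih fun j hj hjn => h j hj (by omega)
      _ = r ^ (n + 1 - m) * u m := by rw [Nat.sub_add_comm hmn, pow_succ]; ring

lemma one_add_pow_le_exp_mul {a : ℝ} (ha : -1 ≤ a) (n : ℕ) : (1 + a) ^ n ≤ exp (n * a) := by
  rw [exp_nat_mul]
  exact pow_le_pow_left₀ (by linarith) (by linarith [add_one_le_exp a]) n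

theorem stmt2_general (k : ℕ) (hk : 2 ≤ k) (t : ℕ → ℝ)
    (h1 : t 1 = 0) (hk1 : 1 ≤ t k) :
    1 / (300 * (k : ℝ) ^ 2) ≤
      ∑ j ∈ Finset.Icc 2 k, (t j - t (j - 1)) ^ 2 / (1 + 2 * t (j - 1) ^ 2) := by
  by_contra! hsum
  have hk0 : (0 : ℝ) < k := by exact_mod_cast (by omega : 0 < k)
  set ε : ℝ := 1 / (10 * k) with hε
  have hε0 : 0 ≤ ε := by positivity
  have hkε : (k : ℝ) * (2 * ε) = 1 / 5 := by rw [hε]; field_simp; norm_num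
  have hterm : ∀ j ∈ Icc 2 k, (t j - t (j - 1)) ^ 2 / (1 + 2 * t (j - 1) ^ 2) ≤ ε ^ 2 :=
    fun j hj => calc
      _ ≤ _ := single_le_sum (fun i _ => by positivity) hj
      _ ≤ 1 / (300 * (k : ℝ) ^ 2) := hsum.le
      _ ≤ ε ^ 2 := by rw [div_pow, one_pow]; gcongr; nlinarith
  have hgrowth : 1 / 2 + |t k| ≤ (1 + 2 * ε) ^ (k - 1) * (1 / 2 + |t 1|) :=
    le_pow_sub_mul_of_le_mul (u := fun j => 1 / 2 + |t j|) (by positivity) (by omega)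
      fun j hj hjk => half_add_abs_le_of_sq_div_le hε0 (hterm j (mem_Icc.2 ⟨hj, hjk⟩))
  have hpow : (1 + 2 * ε) ^ (k - 1) ≤ exp 1 := calc
    _ ≤ exp ((k - 1 : ℕ) * (2 * ε)) := one_add_pow_le_exp_mul (by linarith) _
    _ ≤ exp (k * (2 * ε)) := by gcongr; exact_mod_cast Nat.sub_le k 1
    _ ≤ exp 1 := by rw [hkε]; gcongr; norm_num
  rw [h1, abs_zero] at hgrowth
  linarith [le_abs_self (t k), exp_one_lt_three]

theorem stmt2 (k : ℕ) (hk : 2 ≤ k) (t : ℕ → ℝ)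
    (ht : ∀ j, 0 ≤ t j) (h1 : t 1 = 0) (hk1 : 1 ≤ t k) :
    1 / (300 * (k : ℝ) ^ 2) ≤
      ∑ j ∈ Finset.Icc 2 k, (t j - t (j - 1)) ^ 2 / (1 + 2 * t (j - 1) ^ 2) :=
  stmt2_general k hk t h1 hk1
end

section
/- For all real t_j, t_k ≥ 0 and all real σ_j, σ_k, setting s_j = √(1 + t_j²) and s_k = √(1 + t_k²), one has |s_j t_k e^{iσ_k} − s_k t_j e^{iσ_j}|² ≥ (1/4)(t_k − t_j)² · ( 1/(1 + 2 t_j²) + 1/(1 + 2 t_k²) ). In particular, if moreover t_j, t_k ∈ [0,1], then |s_j t_k e^{iσ_k} − s_k t_j e^{iσ_j}|² ≥ (1/6)(t_k − t_j)². -/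
/-!
Write `A = s_j t_k` and `B = s_k t_j`, both nonnegative. The modulus is at least `|A - B|`, and
`A² - B² = t_k² - t_j²` while `(A + B)² ≤ 2 (A² + B²) = 2 (t_j² + t_k² + 2 t_j² t_k²)`, so
`(A - B)² ≥ (t_k² - t_j²)² / (2 (t_j² + t_k² + 2 t_j² t_k²))`; the stated bound is below this
by a polynomial inequality.
-/

open Complex

lemma sq_sub_le_norm_mul_exp_sub_mul_exp {A B : ℝ} (hA : 0 ≤ A) (hB : 0 ≤ B) (α β : ℝ) :
    (A - B) ^ 2 ≤ ‖(A : ℂ) * exp (α * I) - (B : ℂ) * exp (β * I)‖ ^ 2 := by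
  have hnorm : ∀ {C : ℝ}, 0 ≤ C → ∀ γ : ℝ, ‖(C : ℂ) * exp (γ * I)‖ = C := fun hC γ => by
    rw [norm_mul, norm_exp_ofReal_mul_I, mul_one, norm_real, Real.norm_of_nonneg hC]
  have habs := abs_norm_sub_norm_le ((A : ℂ) * exp (α * I)) ((B : ℂ) * exp (β * I))
  rw [hnorm hA, hnorm hB] at habs
  exact sq_le_sq.2 (by rwa [abs_norm])

lemma sq_sqrt_one_add_sq_mul (a b : ℝ) : (√(1 + a ^ 2) * b) ^ 2 = (1 + a ^ 2) * b ^ 2 := by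
  rw [mul_pow, Real.sq_sqrt (by positivity)]

lemma mul_add_sq_le_add_sq_mul_one_add_two_mul_sq {a b : ℝ} (ha : 0 ≤ a) (hb : 0 ≤ b) :
    (1 + a ^ 2 + b ^ 2) * (a ^ 2 + b ^ 2 + 2 * a ^ 2 * b ^ 2) ≤
      (a + b) ^ 2 * ((1 + 2 * a ^ 2) * (1 + 2 * b ^ 2)) := by
  nlinarith [mul_nonneg ha hb, mul_nonneg (mul_nonneg ha hb) (mul_nonneg (sq_nonneg a) (sq_nonneg b)),
    mul_nonneg (mul_nonneg ha hb) (add_nonneg (sq_nonneg a) (sq_nonneg b)),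
    sq_nonneg (a ^ 2 - b ^ 2), mul_nonneg (sq_nonneg a) (sq_nonneg b),
    mul_nonneg (mul_nonneg (sq_nonneg a) (sq_nonneg b)) (add_nonneg (sq_nonneg a) (sq_nonneg b))]

lemma quarter_bound_mul_le_sq_sub_sq {a b : ℝ} (ha : 0 ≤ a) (hb : 0 ≤ b) :
    1 / 4 * (b - a) ^ 2 * (1 / (1 + 2 * a ^ 2) + 1 / (1 + 2 * b ^ 2)) *
        (2 * (a ^ 2 + b ^ 2 + 2 * a ^ 2 * b ^ 2)) ≤ (b ^ 2 - a ^ 2) ^ 2 := by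
  have hden : 0 < (1 + 2 * a ^ 2) * (1 + 2 * b ^ 2) := by positivity
  calc 1 / 4 * (b - a) ^ 2 * (1 / (1 + 2 * a ^ 2) + 1 / (1 + 2 * b ^ 2)) *
        (2 * (a ^ 2 + b ^ 2 + 2 * a ^ 2 * b ^ 2))
      = (b - a) ^ 2 * ((1 + a ^ 2 + b ^ 2) * (a ^ 2 + b ^ 2 + 2 * a ^ 2 * b ^ 2) /
          ((1 + 2 * a ^ 2) * (1 + 2 * b ^ 2))) := by
        field_simp
        ring
    _ ≤ (b - a) ^ 2 * (a + b) ^ 2 := by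
        gcongr
        exact (div_le_iff₀ hden).2 (mul_add_sq_le_add_sq_mul_one_add_two_mul_sq ha hb)
    _ = (b ^ 2 - a ^ 2) ^ 2 := by ring

lemma quarter_bound_le_sq_sub {a b : ℝ} (ha : 0 ≤ a) (hb : 0 ≤ b) :
    1 / 4 * (b - a) ^ 2 * (1 / (1 + 2 * a ^ 2) + 1 / (1 + 2 * b ^ 2)) ≤
      (√(1 + a ^ 2) * b - √(1 + b ^ 2) * a) ^ 2 := by
  set A := √(1 + a ^ 2) * b
  set B := √(1 + b ^ 2) * a
  have hA2 : A ^ 2 = (1 + a ^ 2) * b ^ 2 := sq_sqrt_one_add_sq_mul a b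
  have hB2 : B ^ 2 = (1 + b ^ 2) * a ^ 2 := sq_sqrt_one_add_sq_mul b a
  set D := 2 * (a ^ 2 + b ^ 2 + 2 * a ^ 2 * b ^ 2)
  have hsum : 2 * (A ^ 2 + B ^ 2) = D := by rw [hA2, hB2]; ring
  have hdiff : A ^ 2 - B ^ 2 = b ^ 2 - a ^ 2 := by rw [hA2, hB2]; ring
  have hfactor : (b ^ 2 - a ^ 2) ^ 2 ≤ (A - B) ^ 2 * D := by
    calc (b ^ 2 - a ^ 2) ^ 2 = (A - B) ^ 2 * (A + B) ^ 2 := by rw [← hdiff]; ring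
      _ ≤ (A - B) ^ 2 * D := by rw [← hsum]; gcongr; exact add_sq_le
  rcases (show 0 ≤ D by positivity).eq_or_lt with hD | hD
  · obtain ⟨rfl, rfl⟩ : a = 0 ∧ b = 0 := by constructor <;> nlinarith
    simpa using sq_nonneg (A - B)
  · exact le_of_mul_le_mul_right ((quarter_bound_mul_le_sq_sub_sq ha hb).trans hfactor) hD

lemma sixth_mul_sq_le_quarter_bound {a b : ℝ} (ha : a ^ 2 ≤ 1) (hb : b ^ 2 ≤ 1) :
    1 / 6 * (b - a) ^ 2 ≤ 1 / 4 * (b - a) ^ 2 * (1 / (1 + 2 * a ^ 2) + 1 / (1 + 2 * b ^ 2)) := by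
  have third_le : ∀ {c : ℝ}, c ^ 2 ≤ 1 → 1 / 3 ≤ 1 / (1 + 2 * c ^ 2) := fun hc =>
    one_div_le_one_div_of_le (by positivity) (by linarith)
  nlinarith [third_le ha, third_le hb, sq_nonneg (b - a)]

theorem stmt3 (tj tk σj σk : ℝ) (htj : 0 ≤ tj) (htk : 0 ≤ tk) :
    (1 / 4) * (tk - tj) ^ 2 * (1 / (1 + 2 * tj ^ 2) + 1 / (1 + 2 * tk ^ 2)) ≤
      ‖(((Real.sqrt (1 + tj ^ 2) * tk : ℝ) : ℂ) * Complex.exp ((σk : ℂ) * Complex.I)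
        - ((Real.sqrt (1 + tk ^ 2) * tj : ℝ) : ℂ) * Complex.exp ((σj : ℂ) * Complex.I))‖ ^ 2
    ∧ (tj ≤ 1 → tk ≤ 1 →
      (1 / 6) * (tk - tj) ^ 2 ≤
        ‖(((Real.sqrt (1 + tj ^ 2) * tk : ℝ) : ℂ) * Complex.exp ((σk : ℂ) * Complex.I)
          - ((Real.sqrt (1 + tk ^ 2) * tj : ℝ) : ℂ) * Complex.exp ((σj : ℂ) * Complex.I))‖ ^ 2) := by
  have hbound := (quarter_bound_le_sq_sub htj htk).trans
    (sq_sub_le_norm_mul_exp_sub_mul_exp (by positivity) (by positivity) σk σj)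
  exact ⟨hbound, fun hj hk =>
    (sixth_mul_sq_le_quarter_bound (pow_le_one₀ htj hj) (pow_le_one₀ htk hk)).trans hbound⟩
end

section
/- For all real t, t_j ≥ 0, setting s = √(1+t²) and s_j = √(1+t_j²), one has (s_j² + t_j²)(s² + t²) − 4 s t s_j t_j ≥ (1 + 2t²) / (2(1 + 2 t_j²)). -/
/-!
Put `a = s² + t² = 1 + 2t²`, `b = s_j² + t_j² = 1 + 2t_j²` and `B = 4 s t s_j t_j`. Since
`(2st)² = a² - 1`, we have `B² = (a² - 1)(b² - 1)`, so `(ab)² - B² = a² + b² - 1 ≥ a²`.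
The identity `2ab (ab - B) = (ab)² - B² + (ab - B)²` then gives `2ab (ab - B) ≥ a²`,
which is the claim after dividing by `2ab`.
-/

lemma div_two_mul_le_mul_sub {a b B : ℝ} (ha : 1 ≤ a) (hb : 1 ≤ b)
    (hB : B ^ 2 ≤ (a ^ 2 - 1) * (b ^ 2 - 1)) : a / (2 * b) ≤ a * b - B := by
  have hab : 0 < 2 * a * b := by positivity
  have h_mul : a ^ 2 ≤ 2 * a * b * (a * b - B) := by
    nlinarith [sq_nonneg (a * b - B)]
  rw [div_le_iff₀ (by positivity)]
  nlinarith

lemma sq_two_mul_sqrt_one_add_sq_mul (t : ℝ) :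
    (2 * √(1 + t ^ 2) * t) ^ 2 = (1 + 2 * t ^ 2) ^ 2 - 1 := by
  rw [mul_pow, mul_pow, Real.sq_sqrt (by positivity)]
  ring

theorem stmt4_general (t tj : ℝ) :
    (1 + 2 * t ^ 2) / (2 * (1 + 2 * tj ^ 2)) ≤
      (Real.sqrt (1 + tj ^ 2) ^ 2 + tj ^ 2) * (Real.sqrt (1 + t ^ 2) ^ 2 + t ^ 2)
        - 4 * Real.sqrt (1 + t ^ 2) * t * Real.sqrt (1 + tj ^ 2) * tj := by
  have hB : (4 * √(1 + t ^ 2) * t * √(1 + tj ^ 2) * tj) ^ 2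
      ≤ ((1 + 2 * t ^ 2) ^ 2 - 1) * ((1 + 2 * tj ^ 2) ^ 2 - 1) := by
    rw [show 4 * √(1 + t ^ 2) * t * √(1 + tj ^ 2) * tj
        = (2 * √(1 + t ^ 2) * t) * (2 * √(1 + tj ^ 2) * tj) by ring,
      mul_pow, sq_two_mul_sqrt_one_add_sq_mul, sq_two_mul_sqrt_one_add_sq_mul]
  have h := div_two_mul_le_mul_sub (by nlinarith [sq_nonneg t]) (by nlinarith [sq_nonneg tj]) hB
  rw [Real.sq_sqrt (by positivity), Real.sq_sqrt (by positivity)]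
  linear_combination h

theorem stmt4 (t tj : ℝ) (ht : 0 ≤ t) (htj : 0 ≤ tj) :
    (1 + 2 * t ^ 2) / (2 * (1 + 2 * tj ^ 2)) ≤
      (Real.sqrt (1 + tj ^ 2) ^ 2 + tj ^ 2) * (Real.sqrt (1 + t ^ 2) ^ 2 + t ^ 2)
        - 4 * Real.sqrt (1 + t ^ 2) * t * Real.sqrt (1 + tj ^ 2) * tj :=
  stmt4_general t tj
end

section
/- Let A be an n×n complex matrix all of whose singular values are ≥ 1. Then for any index sets I, J ⊆ {1,…,n} with |I| = |J| = m < n, the submatrix A^{(I|J)} obtained by deleting the rows indexed by I and the columns indexed by J satisfies |det A^{(I|J)}| ≤ |det A|. -/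
/-!
Put `M = Aᴴ * A`, so that `M - 1` is positive semidefinite and `det M = |det A|²`, and let
`B = A.submatrix r c`. The Gram matrix `Bᴴ * B` differs from the principal submatrix `M_cc` of
`M` by the Gram matrix of the rows of `A` outside `r`, which is positive semidefinite; since the
determinant is monotone on positive semidefinite matrices, `det (Bᴴ * B) ≤ det M_cc`.
Finally `det M = det M_cc * det S` with `S` the Schur complement of `M_cc` in `M`, and `S - 1` is
again positive semidefinite, so `det S ≥ 1`.
-/

open Matrix Function
open scoped ComplexOrder

theorem Function.Injective.exists_sum_equiv_inl {m n : Type*} [Fintype m] [DecidableEq n]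
    {g : m → n} (hg : Injective g) :
    ∃ e : m ⊕ ↥(Set.range g)ᶜ ≃ n, ∀ i, e (Sum.inl i) = g i :=
  ⟨(Equiv.sumCongr (Equiv.ofInjective g hg) (Equiv.refl _)).trans (Equiv.Set.sumCompl _),
    fun _ => rfl⟩

namespace Matrix

variable {m n l p : Type*} [Fintype m] [Fintype n] [DecidableEq n] [Fintype l] [DecidableEq l]
  [Fintype p] [DecidableEq p]

theorem one_le_det_of_posSemidef_sub_one {N : Matrix n n ℂ} (h : (N - 1).PosSemidef) :
    1 ≤ N.det := by
  have hN : N.IsHermitian := by simpa using h.1.add isHermitian_one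
  have hev (i : n) : (1 : ℂ) ≤ hN.eigenvalues i := by
    have hi : (hN.eigenvalues i : ℂ) - 1 ∈ spectrum ℂ (N - 1) := by
      rw [← map_one (algebraMap ℂ (Matrix n n ℂ)), ← spectrum.sub_singleton_eq]
      exact Set.sub_mem_sub (by simp [hN.spectrum_eq_image_range]) rfl
    simpa [sub_nonneg] using (posSemidef_iff_isHermitian_and_spectrum_nonneg.mp h).2 hi
  rw [hN.det_eq_prod_eigenvalues]
  exact Finset.one_le_prod fun i _ => hev i

open scoped MatrixOrder in
theorem PosSemidef.det_le_det_add {S Y : Matrix n n ℂ} (hS : S.PosSemidef)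
    (hY : Y.PosSemidef) : S.det ≤ (S + Y).det := by
  obtain ⟨B, rfl⟩ := CStarAlgebra.nonneg_iff_eq_star_mul_self.mp hS.nonneg
  rw [star_eq_conjTranspose] at hS ⊢
  by_cases hB : IsUnit B.det
  · have hBH : IsUnit Bᴴ.det := by simpa using hB.star
    have hfactor : Bᴴ * B + Y = Bᴴ * (1 + (B⁻¹)ᴴ * Y * B⁻¹) * B := by
      simp only [conjTranspose_nonsing_inv, Matrix.mul_add, Matrix.add_mul, Matrix.mul_one,
        ← Matrix.mul_assoc, mul_nonsing_inv _ hBH, Matrix.one_mul,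
        nonsing_inv_mul_cancel_right _ _ hB]
    have hone : 1 ≤ (1 + (B⁻¹)ᴴ * Y * B⁻¹).det :=
      one_le_det_of_posSemidef_sub_one (by simpa using hY.conjTranspose_mul_mul_same B⁻¹)
    calc (Bᴴ * B).det = (Bᴴ * B).det * 1 := (mul_one _).symm
      _ ≤ (Bᴴ * B).det * (1 + (B⁻¹)ᴴ * Y * B⁻¹).det :=
          mul_le_mul_of_nonneg_left hone hS.det_nonneg
      _ = (Bᴴ * B + Y).det := by rw [hfactor]; simp only [det_mul]; ring
  · rw [isUnit_iff_ne_zero, not_not] at hB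
    rw [det_mul, hB, mul_zero]
    exact (hS.add hY).det_nonneg

theorem det_toBlocks₁₁_le_det [DecidableEq m] {M : Matrix (m ⊕ l) (m ⊕ l) ℂ}
    (hM : (M - 1).PosSemidef) : M.toBlocks₁₁.det ≤ M.det := by
  have hMH : M.IsHermitian := by simpa using hM.1.add isHermitian_one
  obtain ⟨P, X, C, Q, rfl⟩ : ∃ P X C Q, M = fromBlocks P X C Q :=
    ⟨_, _, _, _, (fromBlocks_toBlocks M).symm⟩
  obtain ⟨-, rfl, -, -⟩ := isHermitian_fromBlocks_iff.mp hMH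
  rw [toBlocks_fromBlocks₁₁]
  have hP : P.PosDef := by
    have hP1 : (P - 1).PosSemidef := by
      convert hM.submatrix Sum.inl using 1
      ext i j
      simp [one_apply]
    simpa using PosDef.posSemidef_add hP1 PosDef.one
  have := hP.isUnit.invertible
  have hSchur : (Q - Xᴴ * P⁻¹ * X - 1).PosSemidef := by
    -- adding the projection onto the first block to `M - 1` restores `P` in the corner
    have hproj : (fromBlocks (1 : Matrix m m ℂ) 0 0 (0 : Matrix l l ℂ)).PosSemidef := by
      rw [← diagonal_one, ← diagonal_zero, fromBlocks_diagonal]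
      exact PosSemidef.diagonal fun i => by cases i <;> simp
    have h : (fromBlocks P X Xᴴ (Q - 1)).PosSemidef := by
      convert hM.add hproj using 1
      ext (i | i) (j | j) <;> simp [one_apply]
    rw [sub_right_comm]
    exact (PosDef.fromBlocks₁₁ X (Q - 1) hP).mp h
  rw [det_fromBlocks₁₁, invOf_eq_nonsing_inv]
  exact le_mul_of_one_le_right hP.det_pos.le (one_le_det_of_posSemidef_sub_one hSchur)

theorem det_submatrix_le_det [DecidableEq m] {M : Matrix n n ℂ} (hM : (M - 1).PosSemidef)
    {c : m → n} (hc : Injective c) : (M.submatrix c c).det ≤ M.det := by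
  obtain ⟨e, he⟩ := hc.exists_sum_equiv_inl
  have hblock : (M.submatrix e e).toBlocks₁₁ = M.submatrix c c := by
    ext i j
    simp [toBlocks₁₁, he]
  rw [← hblock, ← det_submatrix_equiv_self e M]
  apply det_toBlocks₁₁_le_det
  simpa [submatrix_sub, submatrix_one_equiv] using (posSemidef_submatrix_equiv e).mpr hM

theorem det_conjTranspose_mul_self_submatrix_le (A : Matrix n p ℂ) {r : m → n}
    (hr : Injective r) : ((A.submatrix r id)ᴴ * A.submatrix r id).det ≤ (Aᴴ * A).det := by
  obtain ⟨e, he⟩ := hr.exists_sum_equiv_inl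
  have hrows :
      A.submatrix e id = fromRows (A.submatrix r id) (A.submatrix (e ∘ Sum.inr) id) := by
    ext (i | i) j <;> simp [he]
  have hgram : Aᴴ * A = (A.submatrix e id)ᴴ * A.submatrix e id := by
    rw [conjTranspose_submatrix, submatrix_mul_equiv]
    simp
  rw [hgram, hrows, conjTranspose_fromRows_eq_fromCols_conjTranspose, fromCols_mul_fromRows]
  exact (posSemidef_conjTranspose_mul_self _).det_le_det_add
    (posSemidef_conjTranspose_mul_self _)

theorem det_conjTranspose_mul_self (A : Matrix n n ℂ) :
    (Aᴴ * A).det = (‖A.det‖ ^ 2 : ℝ) := by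
  rw [det_mul, det_conjTranspose, Complex.star_def, ← Complex.normSq_eq_norm_sq,
    Complex.normSq_eq_conj_mul_self]

end Matrix

open ComplexOrder in
theorem stmt8_general (n : ℕ) (A : Matrix (Fin n) (Fin n) ℂ)
    (hA : (A.conjTranspose * A - 1).PosSemidef)
    (k : ℕ)
    (r c : Fin k → Fin n) (hr : Function.Injective r) (hc : Function.Injective c) :
    ‖(A.submatrix r c).det‖ ≤ ‖A.det‖ := by
  have hgram : ((A.submatrix r c)ᴴ * A.submatrix r c).det ≤ (Aᴴ * A).det :=
    calc _ ≤ ((A.submatrix id c)ᴴ * A.submatrix id c).det :=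
          det_conjTranspose_mul_self_submatrix_le (A.submatrix id c) hr
      _ = ((Aᴴ * A).submatrix c c).det := by
          rw [conjTranspose_submatrix, ← submatrix_mul _ _ _ _ _ bijective_id]
      _ ≤ (Aᴴ * A).det := det_submatrix_le_det hA hc
  rw [det_conjTranspose_mul_self, det_conjTranspose_mul_self, Complex.real_le_real] at hgram
  exact le_of_sq_le_sq hgram (norm_nonneg _)

open ComplexOrder in
theorem stmt8 (n : ℕ) (A : Matrix (Fin n) (Fin n) ℂ)
    (hA : (A.conjTranspose * A - 1).PosSemidef)
    (k : ℕ) (hk : 1 ≤ k) (hkn : k ≤ n)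
    (r c : Fin k → Fin n) (hr : Function.Injective r) (hc : Function.Injective c) :
    ‖(A.submatrix r c).det‖ ≤ ‖A.det‖ :=
  stmt8_general n A hA k r c hr hc
end

section
/- Let W ≥ 1, let S be a W×W real symmetric matrix with nonnegative off-diagonal entries and zero row sums satisfying xᵀ(I+S)x ≥ c₀‖x‖² for all x ∈ ℝ^W (some c₀ > 0), and let E ∈ ℝ with E² ≤ 2. Set a₊ = (iE + √(4−E²))/2 and 𝔨(a) = a²/2 − iEa − Log a. Define, for r = (r₁,…,r_W) ∈ (0,∞)^W and b_j = r_j a₊, the function ℓ(b) = −(1/4)∑_{j,k} S_{jk}(b_j − b_k)² + ∑_j 𝔨(b_j). Then Re( ℓ(b) − W·𝔨(a₊) ) ≥ (c₀(2−E²)/4) ∑_{j=1}^W (r_j − 1)² + ∑_{j=1}^W (r_j − log r_j − 1). In particular Re(ℓ(b) − W𝔨(a₊)) ≥ 0, with equality iff all r_j = 1. -/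
/-!
Since `|a₊| = 1` and `Re (a₊²) = (2 - E²)/2`, the real part of `𝔨(t a₊) - 𝔨(a₊)` is the explicit function
`(2 - E²)/4 (t - 1)² + (t - log t - 1)` of `t > 0`. Because `S` is symmetric with zero row sums, the coupling
term is a multiple of the quadratic form of `S` in `x = r - 1`, so altogether
`Re (ℓ(b) - W 𝔨(a₊)) = (2 - E²)/4 · xᵀ(I + S)x + ∑ⱼ (rⱼ - log rⱼ - 1)`,
and both summands are nonnegative, the first by the spectral bound on `I + S`.
-/

open Complex Matrix

theorem Matrix.IsSymm.sum_sum_mul_sub_sq {R ι : Type*} [CommRing R] [Fintype ι]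
    {S : Matrix ι ι R} (hS : S.IsSymm) (hrow : ∀ i, ∑ j, S i j = 0) (y : ι → R) :
    ∑ i, ∑ j, S i j * (y i - y j) ^ 2 = -2 * (y ⬝ᵥ S *ᵥ y) := by
  have hcol : ∀ j, ∑ i, S i j = 0 := fun j => by simpa only [hS.apply] using hrow j
  have hleft : ∑ i, ∑ j, S i j * y i ^ 2 = 0 := by simp [← Finset.sum_mul, hrow]
  have hright : ∑ i, ∑ j, S i j * y j ^ 2 = 0 := by
    rw [Finset.sum_comm]; simp [← Finset.sum_mul, hcol]
  have hform : y ⬝ᵥ S *ᵥ y = ∑ i, ∑ j, S i j * (y i * y j) := by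
    simp only [dotProduct, mulVec, Finset.mul_sum]
    exact Finset.sum_congr rfl fun i _ => Finset.sum_congr rfl fun j _ => by ring
  calc ∑ i, ∑ j, S i j * (y i - y j) ^ 2
      = ∑ i, ∑ j, S i j * y i ^ 2 + ∑ i, ∑ j, S i j * y j ^ 2
          - 2 * ∑ i, ∑ j, S i j * (y i * y j) := by
        simp only [Finset.mul_sum, ← Finset.sum_add_distrib, ← Finset.sum_sub_distrib]
        exact Finset.sum_congr rfl fun i _ => Finset.sum_congr rfl fun j _ => by ring
    _ = -2 * (y ⬝ᵥ S *ᵥ y) := by rw [hleft, hright, hform]; ring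

lemma sub_log_sub_one_nonneg {t : ℝ} (ht : 0 < t) : 0 ≤ t - Real.log t - 1 := by
  linarith [Real.log_le_sub_one_of_pos ht]

lemma sum_sub_log_sub_one_eq_zero_iff {ι : Type*} [Fintype ι] {r : ι → ℝ} (hr : ∀ j, 0 < r j) :
    ∑ j, (r j - Real.log (r j) - 1) = 0 ↔ ∀ j, r j = 1 := by
  rw [Finset.sum_eq_zero_iff_of_nonneg fun j _ => sub_log_sub_one_nonneg (hr j)]
  refine ⟨fun h j => by_contra fun hne => ?_, fun h j _ => by simp [h j]⟩
  linarith [h j (Finset.mem_univ j), Real.log_lt_sub_one_of_pos (hr j) hne]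

-- `saddlePoint E`, `phase E` and `saddleAction S E` are the paper's `a₊`, `𝔨` and `ℓ`.
noncomputable def saddlePoint (E : ℝ) : ℂ := (I * (E : ℂ) + (Real.sqrt (4 - E ^ 2) : ℂ)) / 2

noncomputable def phase (E : ℝ) (z : ℂ) : ℂ := z ^ 2 / 2 - I * (E : ℂ) * z - log z

noncomputable def saddleAction {ι : Type*} [Fintype ι] (S : Matrix ι ι ℝ) (E : ℝ) (b : ι → ℂ) : ℂ :=
  -(1 / 4) * ∑ j, ∑ l, (S j l : ℂ) * (b j - b l) ^ 2 + ∑ j, phase E (b j)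

section saddlePoint

variable {E : ℝ}

lemma saddlePoint_re (E : ℝ) : (saddlePoint E).re = Real.sqrt (4 - E ^ 2) / 2 := by
  simp [saddlePoint]

lemma saddlePoint_im (E : ℝ) : (saddlePoint E).im = E / 2 := by
  simp [saddlePoint]

lemma norm_saddlePoint (hE : E ^ 2 ≤ 4) : ‖saddlePoint E‖ = 1 := by
  have hs := Real.sq_sqrt (sub_nonneg.mpr hE)
  rw [← Real.sqrt_one, Complex.norm_def, Complex.normSq_apply, saddlePoint_re, saddlePoint_im]
  congr 1
  nlinarith

lemma re_saddlePoint_sq (hE : E ^ 2 ≤ 4) : (saddlePoint E ^ 2).re = (2 - E ^ 2) / 2 := by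
  have hs := Real.sq_sqrt (sub_nonneg.mpr hE)
  rw [sq, mul_re, saddlePoint_re, saddlePoint_im]
  nlinarith

lemma re_I_mul_mul_saddlePoint (E : ℝ) : (I * E * saddlePoint E).re = -E ^ 2 / 2 := by
  simp [saddlePoint_re, saddlePoint_im]; ring

lemma re_phase_ofReal_mul_saddlePoint (hE : E ^ 2 ≤ 4) {t : ℝ} (ht : 0 < t) :
    (phase E (t * saddlePoint E)).re = (2 - E ^ 2) / 4 * t ^ 2 + E ^ 2 / 2 * t - Real.log t := by
  have hlog : (log (t * saddlePoint E)).re = Real.log t := by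
    rw [log_re, norm_mul, norm_real, Real.norm_of_nonneg ht.le, norm_saddlePoint hE, mul_one]
  have hquad : ((t * saddlePoint E) ^ 2 / 2).re = t ^ 2 * ((2 - E ^ 2) / 4) := by
    rw [div_ofNat_re, mul_pow, ← ofReal_pow, re_ofReal_mul, re_saddlePoint_sq hE]; ring
  have hlin : (I * E * (t * saddlePoint E)).re = t * (-E ^ 2 / 2) := by
    rw [mul_left_comm, re_ofReal_mul, re_I_mul_mul_saddlePoint]
  rw [phase, sub_re, sub_re, hlog, hquad, hlin]
  ring

lemma re_phase_sub_phase_saddlePoint (hE : E ^ 2 ≤ 4) {t : ℝ} (ht : 0 < t) :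
    (phase E (t * saddlePoint E) - phase E (saddlePoint E)).re
      = (2 - E ^ 2) / 4 * (t - 1) ^ 2 + (t - Real.log t - 1) := by
  have h1 : (phase E (saddlePoint E)).re = (2 - E ^ 2) / 4 + E ^ 2 / 2 := by
    simpa using re_phase_ofReal_mul_saddlePoint hE one_pos
  rw [sub_re, re_phase_ofReal_mul_saddlePoint hE ht, h1]
  ring

lemma re_sum_sum_mul_sub_sq_ofReal_mul {ι : Type*} [Fintype ι] (S : Matrix ι ι ℝ) (r : ι → ℝ)
    (a : ℂ) :
    (∑ j, ∑ l, (S j l : ℂ) * (r j * a - r l * a) ^ 2).re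
      = (∑ j, ∑ l, S j l * (r j - r l) ^ 2) * (a ^ 2).re := by
  have hterm : ∀ j l, (S j l : ℂ) * (r j * a - r l * a) ^ 2
      = ((S j l * (r j - r l) ^ 2 : ℝ) : ℂ) * a ^ 2 := fun j l => by push_cast; ring
  simp only [hterm, ← Finset.sum_mul, ← ofReal_sum, re_ofReal_mul]

lemma re_saddleAction_sub {ι : Type*} [Fintype ι] [DecidableEq ι] {S : Matrix ι ι ℝ} (hS : S.IsSymm)
    (hrow : ∀ i, ∑ j, S i j = 0) (hE : E ^ 2 ≤ 4) {r : ι → ℝ} (hr : ∀ j, 0 < r j) :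
    (saddleAction S E (fun j => r j * saddlePoint E)
        - Fintype.card ι * phase E (saddlePoint E)).re
      = (2 - E ^ 2) / 4 * ((r - 1) ⬝ᵥ (1 + S) *ᵥ (r - 1)) + ∑ j, (r j - Real.log (r j) - 1) := by
  have hcoupling : (∑ j, ∑ l, (S j l : ℂ) * (r j * saddlePoint E - r l * saddlePoint E) ^ 2).re
      = -(2 - E ^ 2) * ((r - 1) ⬝ᵥ S *ᵥ (r - 1)) := by
    have hform := hS.sum_sum_mul_sub_sq hrow (r - 1)
    simp only [Pi.sub_apply, Pi.one_apply, sub_sub_sub_cancel_right] at hform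
    rw [re_sum_sum_mul_sub_sq_ofReal_mul, re_saddlePoint_sq hE, hform]
    ring
  have hphase : (∑ j, phase E (r j * saddlePoint E) - Fintype.card ι * phase E (saddlePoint E)).re
      = (2 - E ^ 2) / 4 * ((r - 1) ⬝ᵥ (r - 1)) + ∑ j, (r j - Real.log (r j) - 1) := by
    rw [← nsmul_eq_mul, ← Finset.card_univ, ← Finset.sum_const, ← Finset.sum_sub_distrib, re_sum]
    simp only [re_phase_sub_phase_saddlePoint hE (hr _), Finset.sum_add_distrib, dotProduct,
      Finset.mul_sum, Pi.sub_apply, Pi.one_apply, sq]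
  have hquarter : ∀ z : ℂ, (-(1 / 4) * z).re = -(1 / 4) * z.re := fun z => by simp [mul_re]
  rw [saddleAction, add_sub_assoc, add_re, hquarter, hcoupling, hphase, add_mulVec, one_mulVec,
    dotProduct_add]
  ring

end saddlePoint

theorem stmt19_general (W : ℕ) (c₀ : ℝ) (hc₀ : 0 < c₀)
    (S : Matrix (Fin W) (Fin W) ℝ) (hsym : S.IsSymm)
    (hrow : ∀ i, ∑ j, S i j = 0)
    (hspec : ∀ x : Fin W → ℝ, c₀ * ∑ i, x i ^ 2 ≤ dotProduct x ((1 + S).mulVec x))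
    (E : ℝ) (hE : E ^ 2 ≤ 2)
    (r : Fin W → ℝ) (hr : ∀ j, 0 < r j) :
    let a : ℂ := (Complex.I * (E : ℂ) + (Real.sqrt (4 - E ^ 2) : ℂ)) / 2
    let k : ℂ → ℂ := fun z => z ^ 2 / 2 - Complex.I * (E : ℂ) * z - Complex.log z
    let b : Fin W → ℂ := fun j => (r j : ℂ) * a
    let L : ℂ := -(1 / 4) * ∑ j, ∑ l, (S j l : ℂ) * (b j - b l) ^ 2 + ∑ j, k (b j)
    (c₀ * (2 - E ^ 2) / 4 * ∑ j, (r j - 1) ^ 2 + ∑ j, (r j - Real.log (r j) - 1)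
        ≤ (L - (W : ℂ) * k a).re)
    ∧ 0 ≤ (L - (W : ℂ) * k a).re
    ∧ ((L - (W : ℂ) * k a).re = 0 ↔ ∀ j, r j = 1) := by
  intro a k b L
  have key : (L - (W : ℂ) * k a).re
      = (2 - E ^ 2) / 4 * ((r - 1) ⬝ᵥ (1 + S) *ᵥ (r - 1)) + ∑ j, (r j - Real.log (r j) - 1) := by
    have h := re_saddleAction_sub hsym hrow (by linarith) hr
    rwa [Fintype.card_fin] at h
  have hE' : 0 ≤ (2 - E ^ 2) / 4 := by linarith
  have hlog : 0 ≤ ∑ j, (r j - Real.log (r j) - 1) :=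
    Finset.sum_nonneg fun j _ => sub_log_sub_one_nonneg (hr j)
  have hsq : 0 ≤ c₀ * (2 - E ^ 2) / 4 * ∑ j, (r j - 1) ^ 2 := by positivity
  have lower : c₀ * (2 - E ^ 2) / 4 * ∑ j, (r j - 1) ^ 2 + ∑ j, (r j - Real.log (r j) - 1)
      ≤ (L - (W : ℂ) * k a).re := by
    calc _ = (2 - E ^ 2) / 4 * (c₀ * ∑ j, (r - 1) j ^ 2) + ∑ j, (r j - Real.log (r j) - 1) := by
          simp only [Pi.sub_apply, Pi.one_apply]; ring
      _ ≤ _ := by rw [key]; gcongr; exact hspec (r - 1)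
  refine ⟨lower, by linarith, fun h => ?_, fun h => ?_⟩
  · exact (sum_sub_log_sub_one_eq_zero_iff hr).mp (by linarith)
  · have hr1 : r - 1 = 0 := funext fun j => sub_eq_zero.mpr (h j)
    rw [key, hr1, (sum_sub_log_sub_one_eq_zero_iff hr).mpr h]
    simp

theorem stmt19 (W : ℕ) (hW : 1 ≤ W) (c₀ : ℝ) (hc₀ : 0 < c₀)
    (S : Matrix (Fin W) (Fin W) ℝ) (hsym : S.IsSymm)
    (hoff : ∀ i j, i ≠ j → 0 ≤ S i j)
    (hrow : ∀ i, ∑ j, S i j = 0)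
    (hspec : ∀ x : Fin W → ℝ, c₀ * ∑ i, x i ^ 2 ≤ dotProduct x ((1 + S).mulVec x))
    (E : ℝ) (hE : E ^ 2 ≤ 2)
    (r : Fin W → ℝ) (hr : ∀ j, 0 < r j) :
    let a : ℂ := (Complex.I * (E : ℂ) + (Real.sqrt (4 - E ^ 2) : ℂ)) / 2
    let k : ℂ → ℂ := fun z => z ^ 2 / 2 - Complex.I * (E : ℂ) * z - Complex.log z
    let b : Fin W → ℂ := fun j => (r j : ℂ) * a
    let L : ℂ := -(1 / 4) * ∑ j, ∑ l, (S j l : ℂ) * (b j - b l) ^ 2 + ∑ j, k (b j)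
    (c₀ * (2 - E ^ 2) / 4 * ∑ j, (r j - 1) ^ 2 + ∑ j, (r j - Real.log (r j) - 1)
        ≤ (L - (W : ℂ) * k a).re)
    ∧ 0 ≤ (L - (W : ℂ) * k a).re
    ∧ ((L - (W : ℂ) * k a).re = 0 ↔ ∀ j, r j = 1) :=
  stmt19_general W c₀ hc₀ S hsym hrow hspec E hE r hr
end
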